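/- arXiv:1810.12036 — 2 statements merged into one kernel-verified Lean document; each statement's English description precedes it below -/
import Mathlib

section
/- There exist dimensional constants k_d, K_d > 0 such that for all s ∈ (0,1] and all x, y ∈ 𝕋^d, k_d (2πs)^{−d/2} exp(−dist(x,y)²/(2s)) ≤ τ_s(y−x) ≤ K_d (2πs)^{−d/2} exp(−dist(x,y)²/(2s)). -/
open MeasureTheory Real

noncomputable section

instance : Fact ((0:ℝ) < 1) := ⟨one_pos⟩

/-- The flat torus `𝕋^d = (ℝ/ℤ)^d`. -/
abbrev Torus (d : ℕ) := Fin d → AddCircle (1:ℝ)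

/-- The canonical lift of a point of `ℝ/ℤ` to `[0,1)`. -/
def liftT (x : AddCircle (1:ℝ)) : ℝ := (AddCircle.equivIco 1 0 x).1

/-- The heat kernel `τ_s` on the torus at time `s`, as a periodized Gaussian. -/
def heatKernel (d : ℕ) (s : ℝ) (z : Torus d) : ℝ :=
  (2 * π * s) ^ (-(d:ℝ)/2) *
    ∑' l : Fin d → ℤ, Real.exp (-(∑ i, (liftT (z i) + (l i : ℝ))^2) / (2*s))

/-- The squared geodesic distance on the torus. -/
def distSq {d : ℕ} (x y : Torus d) : ℝ := ∑ i, (dist (x i) (y i))^2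

/-!
Writing `t = liftT z`, the kernel factorizes as `(2πs)^{-d/2} ∏ᵢ θ_s(tᵢ)` with the
one-dimensional periodized Gaussian `θ_s(t) = ∑ₙ exp(-(t+n)²/(2s))`. The term `n = -round t`
is exactly `exp(-‖t‖²/(2s))`, where `‖t‖ = |t - round t| ≤ 1/2` is the distance on `ℝ/ℤ`;
this gives the lower bound with `k = 1`. For the upper bound, writing `t + n = u + j` with
`u = t - round t` and `j ∈ ℤ`, one has `(u + j)² ≥ u² + j² - |j|`, and since `s ≤ 1` every
term is at most `exp(-‖t‖²/(2s)) · exp(-(j² - |j|)/2)`, whose sum over `j` is a constant.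
-/

open Filter Topology

lemma coe_liftT (w : AddCircle (1:ℝ)) : ((liftT w : ℝ) : AddCircle (1:ℝ)) = w :=
  (AddCircle.equivIco 1 0).symm_apply_apply w

lemma exp_neg_sum_div {ι : Type*} (s : Finset ι) (a : ι → ℝ) (c : ℝ) :
    exp (-(∑ i ∈ s, a i) / c) = ∏ i ∈ s, exp (-a i / c) := by
  rw [← Real.exp_sum, ← Finset.sum_div, Finset.sum_neg_distrib]

theorem hasSum_pi_prod_of_nonneg {ι κ : Type*} [Fintype ι] {f : ι → κ → ℝ}
    (hf : ∀ i n, 0 ≤ f i n) (hs : ∀ i, Summable (f i)) :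
    HasSum (fun l : ι → κ => ∏ i, f i (l i)) (∏ i, ∑' n, f i n) := by
  classical
  set T : Finset κ → Finset (ι → κ) := fun S => Fintype.piFinset fun _ => S
  have hT : Tendsto T atTop atTop := tendsto_atTop_atTop.2 fun u =>
    ⟨u.biUnion fun l => Finset.univ.image l, fun S hS l hl => Fintype.mem_piFinset.2 fun i =>
      hS (Finset.mem_biUnion.2 ⟨l, hl, Finset.mem_image_of_mem _ (Finset.mem_univ i)⟩)⟩
  have hsumT : ∀ S, ∑ l ∈ T S, ∏ i, f i (l i) = ∏ i, ∑ n ∈ S, f i n :=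
    fun S => (Finset.prod_univ_sum _ _).symm
  have hnonneg : ∀ l : ι → κ, 0 ≤ ∏ i, f i (l i) :=
    fun l => Finset.prod_nonneg fun i _ => hf i (l i)
  have hsum : Summable fun l : ι → κ => ∏ i, f i (l i) := by
    refine summable_of_sum_le (c := ∏ i, ∑' n, f i n) hnonneg fun u => ?_
    obtain ⟨S, hS⟩ := tendsto_atTop_atTop.1 hT u
    calc ∑ l ∈ u, ∏ i, f i (l i)
        ≤ ∑ l ∈ T S, ∏ i, f i (l i) :=
          Finset.sum_le_sum_of_subset_of_nonneg (hS S le_rfl) fun l _ _ => hnonneg l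
      _ = ∏ i, ∑ n ∈ S, f i n := hsumT S
      _ ≤ ∏ i, ∑' n, f i n :=
          Finset.prod_le_prod (fun i _ => Finset.sum_nonneg fun n _ => hf i n)
            fun i _ => (hs i).sum_le_tsum S fun n _ => hf i n
  have hlim : Tendsto (fun S => ∏ i, ∑ n ∈ S, f i n) atTop (𝓝 (∏ i, ∑' n, f i n)) :=
    tendsto_finsetProd _ fun i _ => (hs i).hasSum
  have hlim' := hsum.hasSum.comp hT
  simp only [Function.comp_def, hsumT] at hlim'
  exact tendsto_nhds_unique hlim' hlim ▸ hsum.hasSum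

lemma sq_add_sq_sub_abs_le_sq_add {u j : ℝ} (hu : |u| ≤ 1 / 2) :
    u ^ 2 + (j ^ 2 - |j|) ≤ (u + j) ^ 2 := by
  nlinarith [neg_abs_le (u * j), abs_mul u j, mul_le_mul_of_nonneg_right hu (abs_nonneg j)]

def latticeWeight (j : ℤ) : ℝ := exp (-((j : ℝ) ^ 2 - |(j : ℝ)|) / 2)

lemma summable_latticeWeight : Summable latticeWeight := by
  have h := summable_pow_mul_jacobiTheta₂_term_bound (1 / (4 * π)) (T := 1 / (2 * π))
    (by positivity) 0
  refine h.congr fun j => ?_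
  rw [latticeWeight, pow_zero, one_mul, Int.cast_abs]
  congr 1
  field_simp
  ring

def latticeWeightSum : ℝ := ∑' j, latticeWeight j

lemma latticeWeightSum_pos : 0 < latticeWeightSum :=
  summable_latticeWeight.tsum_pos (fun _ => (exp_pos _).le) 0 (exp_pos _)

def periodizedGaussian (s t : ℝ) : ℝ := ∑' n : ℤ, exp (-(t + n) ^ 2 / (2 * s))

lemma periodizedGaussian_nonneg (s t : ℝ) : 0 ≤ periodizedGaussian s t :=
  tsum_nonneg fun _ => (exp_pos _).le

section periodizedGaussian

variable {s : ℝ} (hs0 : 0 < s) (hs1 : s ≤ 1) (t : ℝ)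
include hs0 hs1

lemma exp_neg_sq_div_le_mul_latticeWeight (n : ℤ) :
    exp (-(t + n) ^ 2 / (2 * s)) ≤
      exp (-‖(t : AddCircle (1:ℝ))‖ ^ 2 / (2 * s)) * latticeWeight (n + round t) := by
  set u := t - round t
  set j : ℤ := n + round t
  have hnorm : ‖(t : AddCircle (1:ℝ))‖ = |u| := UnitAddCircle.norm_eq
  have htu : t + n = u + j := by simp only [u, j, Int.cast_add]; ring
  have hj : 0 ≤ (j : ℝ) ^ 2 - |(j : ℝ)| := by
    have := Int.natAbs_le_self_sq j
    rw [sub_nonneg, ← Int.cast_abs, Int.abs_eq_natAbs]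
    exact_mod_cast this
  have hsq := sq_add_sq_sub_abs_le_sq_add (j := j) (abs_sub_round t)
  rw [latticeWeight, ← exp_add, hnorm, htu, sq_abs]
  refine exp_le_exp.2 ?_
  calc -(u + j) ^ 2 / (2 * s)
      ≤ -u ^ 2 / (2 * s) - ((j : ℝ) ^ 2 - |(j : ℝ)|) / (2 * s) := by
        rw [← sub_div]; gcongr; linarith
    _ ≤ -u ^ 2 / (2 * s) + -((j : ℝ) ^ 2 - |(j : ℝ)|) / 2 := by
        have := div_le_div_of_nonneg_left hj (by positivity : 0 < 2 * s) (by linarith : 2 * s ≤ 2)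
        linarith

lemma summable_exp_neg_sq_div : Summable fun n : ℤ => exp (-(t + n) ^ 2 / (2 * s)) :=
  .of_nonneg_of_le (fun _ => (exp_pos _).le) (exp_neg_sq_div_le_mul_latticeWeight hs0 hs1 t)
    ((summable_latticeWeight.comp_injective (add_left_injective (round t))).mul_left _)

lemma exp_neg_norm_sq_le_periodizedGaussian :
    exp (-‖(t : AddCircle (1:ℝ))‖ ^ 2 / (2 * s)) ≤ periodizedGaussian s t := by
  have hterm : exp (-(t + ((-round t : ℤ) : ℝ)) ^ 2 / (2 * s)) =
      exp (-‖(t : AddCircle (1:ℝ))‖ ^ 2 / (2 * s)) := by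
    rw [UnitAddCircle.norm_eq, sq_abs, Int.cast_neg, ← sub_eq_add_neg]
  exact hterm ▸ (summable_exp_neg_sq_div hs0 hs1 t).le_tsum _ fun _ _ => (exp_pos _).le

lemma periodizedGaussian_le :
    periodizedGaussian s t ≤ latticeWeightSum * exp (-‖(t : AddCircle (1:ℝ))‖ ^ 2 / (2 * s)) := by
  have hshift : ∑' n : ℤ, latticeWeight (n + round t) = latticeWeightSum :=
    (Equiv.addRight (round t)).tsum_eq latticeWeight
  calc periodizedGaussian s t
      ≤ ∑' n : ℤ, exp (-‖(t : AddCircle (1:ℝ))‖ ^ 2 / (2 * s)) * latticeWeight (n + round t) :=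
        (summable_exp_neg_sq_div hs0 hs1 t).tsum_le_tsum
          (exp_neg_sq_div_le_mul_latticeWeight hs0 hs1 t)
          ((summable_latticeWeight.comp_injective (add_left_injective (round t))).mul_left _)
    _ = latticeWeightSum * exp (-‖(t : AddCircle (1:ℝ))‖ ^ 2 / (2 * s)) := by
        rw [tsum_mul_left, hshift, mul_comm]

end periodizedGaussian

lemma heatKernel_eq_prod {d : ℕ} {s : ℝ} (hs0 : 0 < s) (hs1 : s ≤ 1) (z : Torus d) :
    heatKernel d s z = (2 * π * s) ^ (-(d:ℝ)/2) * ∏ i, periodizedGaussian s (liftT (z i)) := by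
  rw [heatKernel]
  simp_rw [exp_neg_sum_div]
  exact congrArg _ (hasSum_pi_prod_of_nonneg (fun _ _ => (exp_pos _).le)
    fun i => summable_exp_neg_sq_div hs0 hs1 (liftT (z i))).tsum_eq

lemma exp_neg_distSq_div_eq_prod {d : ℕ} (x y : Torus d) (s : ℝ) :
    exp (-(distSq x y) / (2 * s)) =
      ∏ i, exp (-‖((liftT ((y - x) i) : ℝ) : AddCircle (1:ℝ))‖ ^ 2 / (2 * s)) := by
  simp only [distSq, exp_neg_sum_div, coe_liftT, Pi.sub_apply, dist_comm (x _), dist_eq_norm]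

/-- Gaussian bounds for the heat kernel on the torus: there are dimensional constants
`k_d, K_d > 0` such that for all `s ∈ (0,1]` and all `x, y ∈ 𝕋^d`,
`k_d (2πs)^{−d/2} exp(−dist(x,y)²/(2s)) ≤ τ_s(y−x) ≤ K_d (2πs)^{−d/2} exp(−dist(x,y)²/(2s))`. -/
theorem heatKernel_gaussian_bounds (d : ℕ) :
    ∃ k K : ℝ, 0 < k ∧ 0 < K ∧
      ∀ s ∈ Set.Ioc (0:ℝ) 1, ∀ x y : Torus d,
        k * (2 * π * s) ^ (-(d:ℝ)/2) * Real.exp (-(distSq x y) / (2*s)) ≤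
            heatKernel d s (y - x) ∧
          heatKernel d s (y - x) ≤
            K * (2 * π * s) ^ (-(d:ℝ)/2) * Real.exp (-(distSq x y) / (2*s)) := by
  refine ⟨1, latticeWeightSum ^ d, one_pos, pow_pos latticeWeightSum_pos d, ?_⟩
  rintro s ⟨hs0, hs1⟩ x y
  rw [heatKernel_eq_prod hs0 hs1, exp_neg_distSq_div_eq_prod, one_mul]
  set a : Fin d → ℝ := fun i => exp (-‖((liftT ((y - x) i) : ℝ) : AddCircle (1:ℝ))‖ ^ 2 / (2 * s))
  have hK : latticeWeightSum ^ d * (2 * π * s) ^ (-(d:ℝ)/2) * ∏ i, a i =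
      (2 * π * s) ^ (-(d:ℝ)/2) * ∏ i, (latticeWeightSum * a i) := by
    rw [Finset.prod_mul_distrib, Finset.prod_const, Finset.card_univ, Fintype.card_fin]; ring
  rw [hK]
  constructor
  · gcongr with i
    exact exp_neg_norm_sq_le_periodizedGaussian hs0 hs1 _
  · gcongr with i
    · exact fun i _ => periodizedGaussian_nonneg s _
    · exact periodizedGaussian_le hs0 hs1 _

end
end

section
/- Let 𝒳, 𝒴 be Polish spaces, r a finite positive Radon measure and p a probability measure on 𝒳 with p ≪ r, and Φ : 𝒳 → 𝒴 measurable. Suppose there exists measurable Ψ : 𝒴 → 𝒳 with Ψ∘Φ = Id r-almost surely. Then H(p | r) = H(Φ#p | Φ#r). -/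
/-!
Pulled back along `Φ`, the density `d(Φ#p)/d(Φ#r)` is the conditional expectation of `dp/dr`
given `σ(Φ)` (`MeasureTheory.rnDeriv_map`). Since `Ψ ∘ Φ = id` `r`-a.e., every measurable `f`
agrees a.e. with the `σ(Φ)`-measurable function `f ∘ Ψ ∘ Φ`, so this conditional expectation is
`dp/dr` itself, and the substitution `y = Φ x` turns `H(Φ#p | Φ#r)` into `H(p | r)`.
-/

open MeasureTheory

noncomputable section

/-- Relative entropy (Kullback–Leibler divergence) `H(p|r) = ∫ log (dp/dr) dp`. -/
def relEnt {X : Type*} [MeasurableSpace X] (p r : Measure X) : ℝ :=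
  ∫ x, Real.log ((p.rnDeriv r x).toReal) ∂p

open scoped ENNReal

namespace MeasureTheory

variable {X Y : Type*} [MeasurableSpace X] {mY : MeasurableSpace Y} {ν : Measure X}
  {Φ : X → Y} {Ψ : Y → X}

lemma sigmaFinite_trim_comap_of_sigmaFinite_map (hΦ : Measurable Φ)
    [hσ : SigmaFinite (ν.map Φ)] :
    SigmaFinite (ν.trim hΦ.comap_le) := by
  rw [← map_trim_comap hΦ] at hσ
  exact SigmaFinite.of_map _ (comap_measurable Φ).aemeasurable hσ

lemma condLExp_comap_ae_eq_self_of_ae_leftInverse (hΦ : Measurable Φ) (hΨ : Measurable Ψ)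
    (hinv : ∀ᵐ x ∂ν, Ψ (Φ x) = x) [SigmaFinite (ν.trim hΦ.comap_le)] {f : X → ℝ≥0∞}
    (hf : Measurable f) :
    ν⁻[f|mY.comap Φ] =ᵐ[ν] f := by
  have hf_factor : f ∘ Ψ ∘ Φ =ᵐ[ν] f := by
    filter_upwards [hinv] with x hx
    simp [hx]
  calc ν⁻[f|mY.comap Φ] =ᵐ[ν] ν⁻[f ∘ Ψ ∘ Φ|mY.comap Φ] := condLExp_congr_ae hf_factor.symm
    _ = f ∘ Ψ ∘ Φ := condLExp_eq_self _ _ ((hf.comp hΨ).comp (comap_measurable Φ))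
    _ =ᵐ[ν] f := hf_factor

lemma rnDeriv_map_comp_ae_eq_of_ae_leftInverse {μ : Measure X} [IsFiniteMeasure μ]
    [SigmaFinite (ν.map Φ)] (hμν : μ ≪ ν) (hΦ : Measurable Φ) (hΨ : Measurable Ψ)
    (hinv : ∀ᵐ x ∂ν, Ψ (Φ x) = x) :
    (fun x ↦ (μ.map Φ).rnDeriv (ν.map Φ) (Φ x)) =ᵐ[ν] μ.rnDeriv ν :=
  have := sigmaFinite_trim_comap_of_sigmaFinite_map (ν := ν) hΦ
  (rnDeriv_map hμν hΦ).trans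
    (condLExp_comap_ae_eq_self_of_ae_leftInverse hΦ hΨ hinv (Measure.measurable_rnDeriv μ ν))

end MeasureTheory

theorem relEnt_map_of_ae_rightInverse_general
    {X Y : Type*} [MeasurableSpace X] [MeasurableSpace Y]
    (r : Measure X) [IsFiniteMeasure r] (p : Measure X) [IsProbabilityMeasure p]
    (hpr : p ≪ r)
    (Φ : X → Y) (hΦ : Measurable Φ) (Ψ : Y → X) (hΨ : Measurable Ψ)
    (hinv : ∀ᵐ x ∂r, Ψ (Φ x) = x) :
    relEnt p r = relEnt (p.map Φ) (r.map Φ) := by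
  have hdensity := hpr.ae_le (rnDeriv_map_comp_ae_eq_of_ae_leftInverse hpr hΦ hΨ hinv)
  rw [relEnt, relEnt, integral_map hΦ.aemeasurable
    (Measure.measurable_rnDeriv _ _).ennreal_toReal.log.aestronglyMeasurable]
  refine integral_congr_ae ?_
  filter_upwards [hdensity] with x hx
  rw [hx]

/-- Invariance of relative entropy under an `r`-almost-surely injective measurable map:
if `p ≪ r` and `Ψ ∘ Φ = Id` `r`-almost surely, then `H(p | r) = H(Φ#p | Φ#r)`. -/
theorem relEnt_map_of_ae_rightInverse
    {X Y : Type*} [MeasurableSpace X] [TopologicalSpace X] [PolishSpace X] [BorelSpace X]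
    [MeasurableSpace Y] [TopologicalSpace Y] [PolishSpace Y] [BorelSpace Y]
    (r : Measure X) [IsFiniteMeasure r] (p : Measure X) [IsProbabilityMeasure p]
    (hpr : p ≪ r)
    (Φ : X → Y) (hΦ : Measurable Φ) (Ψ : Y → X) (hΨ : Measurable Ψ)
    (hinv : ∀ᵐ x ∂r, Ψ (Φ x) = x) :
    relEnt p r = relEnt (p.map Φ) (r.map Φ) :=
  relEnt_map_of_ae_rightInverse_general r p hpr Φ hΦ Ψ hΨ hinv

end
end
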